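/- arXiv:1809.09033 — 10 statements merged into one kernel-verified Lean document; each statement's English description precedes it below -/
import Mathlib

section
/- A sequence (u_β)_{β<α} in a linear order is densely non-increasing if and only if both of the following hold for all β' < β < α: (i) if β = β'+1 then u_{β'} ≥ u_β; (ii) if β is a limit ordinal and the sequence is constant on the interval [β', β) then u_{β'} ≥ u_β. -/
/-- The sequence `u` is constant on the interval `[γ, γ')`. -/
def ConstantOn {U : Type*} (u : Ordinal → U) (γ γ' : Ordinal) : Prop :=
  ∀ β, γ ≤ β → β < γ' → u β = u γ

/-- The sequence `u` (restricted below `α`) is densely non-increasing. -/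
def DenselyNonIncreasing {U : Type*} [LinearOrder U] (u : Ordinal → U) (α : Ordinal) : Prop :=
  ∀ γ γ', γ < γ' → γ' ≤ α →
    ConstantOn u γ γ' ∨ ∃ β β', γ ≤ β ∧ β < β' ∧ β' < γ' ∧ u β' < u β

/-!
Both conditions say that `u β ≤ u γ` whenever `u` is constant on `[γ, β)` (for a successor
`β = γ + 1` this constancy is automatic). Forwards, apply dense non-increase to `[γ, β + 1)`.
Backwards, a non-constant interval `[γ, γ')` has a least `β` with `u β ≠ u γ`; then `u` is
constant on `[γ, β)`, and the condition at the predecessor of `β`, or at `γ` if `β` is a limit,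
yields the required strict descent ending at `β`.
-/

open Order

section

variable {U : Type*}

theorem constantOn_add_one (u : Ordinal → U) (γ : Ordinal) : ConstantOn u γ (γ + 1) :=
  fun _ hγβ hβ => congrArg u (le_antisymm (lt_add_one_iff.mp hβ) hγβ)

theorem exists_lt_constantOn_ne {u : Ordinal → U} {γ γ' : Ordinal}
    (h : ¬ ConstantOn u γ γ') :
    ∃ β, γ < β ∧ β < γ' ∧ ConstantOn u γ β ∧ u β ≠ u γ := by
  simp only [ConstantOn, not_forall] at h
  obtain ⟨δ, hγδ, hδγ', hδ⟩ := h
  obtain ⟨β, ⟨hγβ, hβγ', hβ⟩, hmin⟩ := Ordinal.lt_wf.has_min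
    {β | γ ≤ β ∧ β < γ' ∧ u β ≠ u γ} ⟨δ, hγδ, hδγ', hδ⟩
  refine ⟨β, hγβ.lt_of_ne (by rintro rfl; exact hβ rfl), hβγ', fun x hγx hxβ => ?_, hβ⟩
  by_contra hx
  exact hmin x ⟨hγx, hxβ.trans hβγ', hx⟩ hxβ

end

section

variable {U : Type*} [LinearOrder U] {u : Ordinal → U} {α γ β : Ordinal}

theorem DenselyNonIncreasing.le_of_constantOn (hu : DenselyNonIncreasing u α)
    (hγβ : γ < β) (hβα : β < α) (hc : ConstantOn u γ β) : u β ≤ u γ := by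
  rcases hu γ (β + 1) (hγβ.trans (lt_add_one _))
      (add_one_le_iff.mpr hβα) with hc' | ⟨b, b', hγb, hbb', hb'β, hlt⟩
  · exact (hc' β hγβ.le (lt_add_one _)).le
  · have hb'β : b' ≤ β := lt_add_one_iff.mp hb'β
    rw [hc b hγb (hbb'.trans_le hb'β)] at hlt
    rcases hb'β.lt_or_eq with hb'β | rfl
    · exact absurd (hc b' (hγb.trans hbb'.le) hb'β) hlt.ne
    · exact hlt.le

theorem exists_le_of_constantOn
    (H : ∀ β' β : Ordinal, β' < β → β < α →
      ((β = β' + 1 → u β ≤ u β') ∧ (IsSuccLimit β → ConstantOn u β' β → u β ≤ u β')))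
    (hγβ : γ < β) (hβα : β < α) (hc : ConstantOn u γ β) :
    ∃ b, γ ≤ b ∧ b < β ∧ u β ≤ u b := by
  rcases Ordinal.zero_or_succ_or_isSuccLimit β with rfl | ⟨a, rfl⟩ | hlim
  · exact absurd hγβ not_lt_zero
  · rw [succ_eq_add_one] at hγβ hβα ⊢
    have haa : a < a + 1 := lt_add_one _
    exact ⟨a, lt_add_one_iff.mp hγβ, haa, (H a (a + 1) haa hβα).1 rfl⟩
  · exact ⟨γ, le_rfl, hγβ, (H γ β hγβ hβα).2 hlim hc⟩

end

theorem denselyNonIncreasing_iff {U : Type*} [LinearOrder U]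
    (u : Ordinal → U) (α : Ordinal) :
    DenselyNonIncreasing u α ↔
      ∀ β' β : Ordinal, β' < β → β < α →
        ((β = β' + 1 → u β ≤ u β') ∧
         (Order.IsSuccLimit β → ConstantOn u β' β → u β ≤ u β')) := by
  constructor
  · intro hu β' β hβ' hβ
    refine ⟨fun hsucc => hu.le_of_constantOn hβ' hβ ?_, fun _ => hu.le_of_constantOn hβ' hβ⟩
    exact hsucc ▸ constantOn_add_one u β'
  · intro H γ γ' hγγ' hγ'α
    refine or_iff_not_imp_left.mpr fun hnc => ?_
    obtain ⟨β, hγβ, hβγ', hc, hne⟩ := exists_lt_constantOn_ne hnc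
    obtain ⟨b, hγb, hbβ, hle⟩ := exists_le_of_constantOn H hγβ (hβγ'.trans_le hγ'α) hc
    exact ⟨b, β, hγb, hbβ, hβγ', hle.lt_of_ne (hc b hγb hbβ ▸ hne)⟩
end

section
/- Let u and v be finite Lyndon words over a linearly ordered alphabet with u lexicographically smaller than v. Then for every natural number n ≥ 0, the word uⁿv is a Lyndon word. -/
/-!
If `u` and `w` are Lyndon words with `u < w`, then `u ++ w` is Lyndon. A suffix starting inside
`u` loses to `u` already within `u`'s length. The suffix `w` and its own suffixes lose because
`u ++ w < w`: either `u` and `w` differ inside `u`, or `w = u ++ t` and then `u ++ w < u ++ t`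
since `w < t`. The theorem follows by induction with `w = uⁿ ++ v`, as `u < uⁿ ++ v`
(for `n = 0` this is `u < v`, otherwise `u` is a proper prefix).
-/

/-- A finite word is a Lyndon word if it is nonempty and lexicographically
strictly smaller than all of its proper nonempty suffixes. -/
def IsLyndon {A : Type*} [LinearOrder A] (w : List A) : Prop :=
  w ≠ [] ∧ ∀ i : ℕ, 0 < i → i < w.length → w < w.drop i

namespace List

variable {α : Type*} [LT α]

theorem isPrefix_or_forall_append_lt_of_lt {u s : List α} (h : u < s) :
    u <+: s ∨ ∀ w w' : List α, u ++ w < s ++ w' := by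
  induction h with
  | nil => exact .inl nil_prefix
  | rel hab => exact .inr fun _ _ => .rel hab
  | cons _ ih =>
    rcases ih with ⟨t, rfl⟩ | h
    · exact .inl ⟨t, rfl⟩
    · exact .inr fun w w' => .cons (h w w')

theorem lt_append_of_ne_nil (u : List α) {t : List α} (ht : t ≠ []) : u < u ++ t := by
  obtain ⟨a, l, rfl⟩ := exists_cons_of_ne_nil ht
  simpa using append_left_lt (l₁ := u) (nil_lt_cons a l)

theorem lt_flatten_replicate_append {u v : List α} (huv : u < v) (n : ℕ) :
    u < (replicate n u).flatten ++ v := by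
  cases n with
  | zero => simpa using huv
  | succ n =>
    have hv : v ≠ [] := by rintro rfl; exact not_lt_nil u huv
    rw [replicate_succ, flatten_cons, append_assoc]
    exact lt_append_of_ne_nil u (by simp [hv])

end List

namespace IsLyndon

variable {A : Type*} [LinearOrder A] {u w : List A}

theorem append_lt_of_lt (hu : u ≠ []) (hw : IsLyndon w) (h : u < w) : u ++ w < w := by
  rcases List.isPrefix_or_forall_append_lt_of_lt h with ⟨t, rfl⟩ | hlt
  · have ht : t ≠ [] := by rintro rfl; simp at h
    have hsuffix := hw.2 u.length (List.length_pos_iff.mpr hu)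
      (by simpa using List.length_pos_iff.mpr ht)
    rw [List.drop_left] at hsuffix
    exact List.append_left_lt hsuffix
  · simpa using hlt w []

theorem append (hu : IsLyndon u) (hw : IsLyndon w) (h : u < w) : IsLyndon (u ++ w) := by
  refine ⟨by simp [hu.1], fun i hi hilen => ?_⟩
  have huw := append_lt_of_lt hu.1 hw h
  rcases lt_trichotomy i u.length with hiu | rfl | hiu
  · rw [List.drop_append_of_le_length hiu.le]
    rcases List.isPrefix_or_forall_append_lt_of_lt (hu.2 i hi hiu) with hpre | hlt
    · have := hpre.length_le
      simp only [List.length_drop] at this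
      omega
    · exact hlt w w
  · rwa [List.drop_left]
  · obtain ⟨j, rfl⟩ := Nat.exists_eq_add_of_lt hiu
    rw [add_assoc, List.drop_length_add_append]
    simp only [List.length_append] at hilen
    exact huw.trans (hw.2 (j + 1) j.succ_pos (by omega))

end IsLyndon

theorem lyndon_pow_mul {A : Type*} [LinearOrder A] (u v : List A)
    (hu : IsLyndon u) (hv : IsLyndon v) (huv : u < v) (n : ℕ) :
    IsLyndon ((List.replicate n u).flatten ++ v) := by
  induction n with
  | zero => simpa using hv
  | succ n ih =>
    rw [List.replicate_succ, List.flatten_cons, List.append_assoc]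
    exact hu.append ih (List.lt_flatten_replicate_append huv n)
end

section
/- Let u and v be finite Lyndon words with u <lex v. Then v can be factorized as v = uⁿxy for some n ≥ 0 and finite words x, y such that |x| ≤ |u| and u <lex x with x not a prefix of u (i.e., u and x differ at some position in their common domain where the letter of u is smaller). -/
/-- `u ◁ x`: `u` and `x` agree on a common prefix and then `u` has a strictly
smaller letter than `x`. -/
def LtStr {A : Type*} [LinearOrder A] (u x : List A) : Prop :=
  ∃ (y z z' : List A) (a b : A), a < b ∧ u = y ++ a :: z ∧ x = y ++ b :: z'

open List

section

variable {A : Type*}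

theorem exists_eq_flatten_replicate_append_not_prefix {u : List A} (hu : u ≠ []) (v : List A) :
    ∃ (k : ℕ) (w : List A), v = (replicate k u).flatten ++ w ∧ ¬ u <+: w := by
  by_cases h : u <+: v
  · obtain ⟨t, rfl⟩ := h
    have : t.length < (u ++ t).length := by simpa using length_pos_iff.mpr hu
    obtain ⟨k, w, rfl, hw⟩ := exists_eq_flatten_replicate_append_not_prefix hu t
    exact ⟨k + 1, w, by simp [replicate_succ], hw⟩
  · exact ⟨0, v, by simp, h⟩
termination_by v.length

variable [LinearOrder A]

theorem ltStr_of_lt_of_not_prefix {u w : List A} (h : u < w) (hp : ¬ u <+: w) : LtStr u w := by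
  induction h with
  | nil => exact absurd nil_prefix hp
  | @cons c u w _ ih =>
    obtain ⟨y, z, z', a, b, hab, rfl, rfl⟩ := ih (fun h => hp (prefix_cons_inj c |>.mpr h))
    exact ⟨c :: y, z, z', a, b, hab, rfl, rfl⟩
  | @rel a u b w hab => exact ⟨[], u, w, a, b, hab, rfl, rfl⟩

theorem LtStr.take {u x : List A} (h : LtStr u x) {n : ℕ} (hn : u.length ≤ n) :
    LtStr u (x.take n) := by
  obtain ⟨y, z, z', a, b, hab, rfl, rfl⟩ := h
  simp only [length_append, length_cons] at hn
  refine ⟨y, z, z'.take (n - y.length - 1), a, b, hab, rfl, ?_⟩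
  rw [take_append, take_of_length_le (by omega), take_cons (by omega)]

namespace IsLyndon

theorem lt_of_eq_append {v p w : List A} (hv : IsLyndon v) (h : v = p ++ w) (hp : p ≠ [])
    (hw : w ≠ []) : v < w := by
  have hlt := hv.2 p.length (length_pos_iff.mpr hp)
    (by simpa [h] using length_pos_iff.mpr hw)
  rw [h, drop_left] at hlt
  rwa [h]

theorem ne_flatten_replicate {v : List A} (hv : IsLyndon v) (u : List A) {k : ℕ} (hk : 2 ≤ k) :
    v ≠ (replicate k u).flatten := by
  obtain ⟨j, rfl⟩ := Nat.exists_eq_add_of_le' hk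
  rintro rfl
  have hu : u ≠ [] := by rintro rfl; exact hv.1 (by simp)
  have hne : (replicate (j + 1) u).flatten ≠ [] := by simp [hu]
  -- `u^(j+2)` is both `u · u^(j+1)` and `u^(j+1) · u`.
  have hlt := hv.lt_of_eq_append (by simp [replicate_succ]) hu hne
  have hpre : (replicate (j + 1) u).flatten <+: (replicate (j + 2) u).flatten :=
    ⟨u, by rw [replicate_succ' (n := j + 1), flatten_append, flatten_singleton]⟩
  exact hpre.le hlt

theorem lt_of_eq_flatten_replicate_append {u v w : List A} (hv : IsLyndon v) (huv : u < v)
    {k : ℕ} (h : v = (replicate k u).flatten ++ w) : u < w := by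
  by_cases hw : w = []
  · subst hw
    rw [append_nil] at h
    match k, h with
    | 0, h => exact absurd (by simpa using h) hv.1
    | 1, h => simp [h] at huv
    | k + 2, h => exact absurd h (hv.ne_flatten_replicate u (by omega))
  · by_cases hp : (replicate k u).flatten = []
    · rwa [h, hp, nil_append] at huv
    · exact List.lt_trans huv (hv.lt_of_eq_append h hp hw)

end IsLyndon

end

theorem lyndon_factorize_pow_prefix {A : Type*} [LinearOrder A] (u v : List A)
    (hu : IsLyndon u) (hv : IsLyndon v) (huv : u < v) :
    ∃ (n : ℕ) (x y : List A),
      v = (List.replicate n u).flatten ++ x ++ y ∧ x.length ≤ u.length ∧ LtStr u x := by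
  obtain ⟨k, w, hvw, hnp⟩ := exists_eq_flatten_replicate_append_not_prefix hu.1 v
  have huw : u < w := hv.lt_of_eq_flatten_replicate_append huv hvw
  refine ⟨k, w.take u.length, w.drop u.length, ?_, length_take_le _ _, ?_⟩
  · rw [append_assoc, take_append_drop, hvw]
  · exact (ltStr_of_lt_of_not_prefix huw hnp).take le_rfl
end

section
/- Let u₁ ≥lex u₂ ≥lex ⋯ ≥lex u_n be a non-increasing sequence of finite Lyndon words. Then u₁ is the longest prefix of the product u₁u₂⋯u_n that is a Lyndon word. -/
/-!
A prefix of `u₁ ⋯ uₙ` longer than `w = u₁` is `p = w ++ r` with `r` a nonempty prefix of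
`u₂ ⋯ uₙ`. If `p` were Lyndon then `w ++ r < r`. But every prefix `r` of a product of words `≤ w` satisfies `r ≤ w ++ r`:
peeling off the first factor `u ≤ w`, either `u` is not a prefix of `w`, and then `u < w`
is decided at a letter, or `w = u ++ t`, and then `w ≤ t ++ u` because the Lyndon word `w`
is smaller than its proper suffix `t`, which lets the inequality for the shorter prefix lift.
-/

section

variable {A : Type*} [LinearOrder A]

theorem List.append_lt_append_of_lt_of_not_prefix {x y : List A} (h : x < y) (hp : ¬x <+: y)
    (s t : List A) : x ++ s < y ++ t := by
  induction h with
  | nil => exact absurd List.nil_prefix hp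
  | cons _ ih => exact List.Lex.cons (ih fun h => hp (List.cons_prefix_cons.mpr ⟨rfl, h⟩))
  | rel hab => exact List.Lex.rel hab

theorem IsLyndon.append_lt_right {u t : List A} (hw : IsLyndon (u ++ t)) (hu : u ≠ [])
    (ht : t ≠ []) : u ++ t < t := by
  simpa using hw.2 u.length (List.length_pos_iff.mpr hu) (by simp [List.length_pos_iff.mpr ht])

theorem IsLyndon.append_le_rotate {u t : List A} (hw : IsLyndon (u ++ t)) (s : List A) :
    u ++ t ++ s ≤ t ++ u ++ s := by
  rcases eq_or_ne u [] with rfl | hu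
  · simp
  rcases eq_or_ne t [] with rfl | ht
  · simp
  have hlt := hw.append_lt_right hu ht
  have hnp : ¬u ++ t <+: t := fun h => hu (by simpa using h.length_le)
  simpa [List.append_assoc] using
    (List.append_lt_append_of_lt_of_not_prefix hlt hnp s (u ++ s)).le

theorem IsLyndon.le_append_of_prefix_flatten {w : List A} (hw : IsLyndon w)
    {L : List (List A)} (hL : ∀ u ∈ L, u ≤ w) {r : List A} (hr : r <+: L.flatten) :
    r ≤ w ++ r := by
  induction L generalizing r with
  | nil =>
    obtain rfl : r = [] := List.prefix_nil.mp hr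
    exact not_lt.mp (List.nil_le _)
  | cons u L ih =>
    rw [List.flatten_cons] at hr
    have huw : u ≤ w := hL u List.mem_cons_self
    -- Core's lemmas state `≤` on lists as `¬ y < x`, Mathlib's order as `x < y ∨ x = y`.
    rcases List.prefix_or_prefix_of_prefix hr (u.prefix_append _) with hru | ⟨r, rfl⟩
    · exact (not_lt.mp hru.le).trans (huw.trans (not_lt.mp List.le_append_left))
    have ihr : r ≤ w ++ r :=
      ih (fun v hv => hL v (List.mem_cons_of_mem u hv)) ((List.prefix_append_right_inj u).mp hr)
    by_cases hpre : u <+: w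
    · obtain ⟨t, rfl⟩ := hpre
      have : r ≤ t ++ (u ++ r) := by
        simpa [List.append_assoc] using ihr.trans (hw.append_le_rotate r)
      simpa [List.append_assoc] using not_lt.mp (List.append_left_le (l₁ := u) (not_lt.mpr this))
    · have hlt : u < w := lt_of_le_of_ne huw fun h => hpre (h ▸ List.prefix_rfl)
      exact (List.append_lt_append_of_lt_of_not_prefix hlt hpre r (u ++ r)).le

end

theorem longest_lyndon_prefix {A : Type*} [LinearOrder A]
    (w : List A) (L : List (List A))
    (hly : ∀ v ∈ w :: L, IsLyndon v)
    (hmono : (w :: L).Chain' (fun a b => b ≤ a)) :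
    w <+: (w :: L).flatten ∧
    ∀ p : List A, p <+: (w :: L).flatten → IsLyndon p → p.length ≤ w.length := by
  have hw : IsLyndon w := hly w List.mem_cons_self
  have hwL : w <+: (w :: L).flatten := w.prefix_append _
  refine ⟨hwL, fun p hp hpl => ?_⟩
  rcases List.prefix_or_prefix_of_prefix hp hwL with hpw | ⟨r, rfl⟩
  · exact hpw.length_le
  rcases eq_or_ne r [] with rfl | hr
  · simp
  have hLw : ∀ u ∈ L, u ≤ w := (List.pairwise_cons.mp (List.isChain_iff_pairwise.mp hmono)).1
  have hrL : r <+: L.flatten := (List.prefix_append_right_inj w).mp hp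
  exact absurd (hpl.append_lt_right hw.1 hr) (hw.le_append_of_prefix_flatten hLw hrL).not_gt
end

section
/- Every nonempty finite word x over a linearly ordered alphabet admits a unique factorization x = u₁u₂⋯u_n into Lyndon words with u₁ ≥lex u₂ ≥lex ⋯ ≥lex u_n. -/
namespace List

theorem exists_isPrefix_isSuffix_of_isPrefix_flatten {α : Type*} :
    ∀ {L : List (List α)} {q : List α}, q <+: L.flatten → q ≠ [] →
      ∃ w ∈ L, ∃ w', w' ≠ [] ∧ w' <+: w ∧ w' <:+ q
  | [], _, hq, hne => absurd (prefix_nil.1 hq) hne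
  | v :: L, q, hq, hne => by
    have hv : v <+: (v :: L).flatten := prefix_append v L.flatten
    rcases le_total q.length v.length with hle | hle
    · exact ⟨v, mem_cons_self, q, hne, prefix_of_prefix_length_le hq hv hle, suffix_refl q⟩
    obtain ⟨r, rfl⟩ := prefix_of_prefix_length_le hv hq hle
    rcases eq_or_ne r [] with rfl | hr
    · exact ⟨v, mem_cons_self, v ++ [], hne, by simp, suffix_refl _⟩
    obtain ⟨w, hw, w', hw'ne, hw'w, hw'r⟩ :=
      exists_isPrefix_isSuffix_of_isPrefix_flatten ((prefix_append_right_inj v).1 hq) hr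
    exact ⟨w, mem_cons_of_mem v hw, w', hw'ne, hw'w, hw'r.trans (suffix_append v r)⟩

variable {α : Type*} [LinearOrder α]

-- `IsPrefix.le` concludes with `List.instLE`, not with the `≤` of `List.instLinearOrder`.
theorem le_of_isPrefix {s t : List α} (h : s <+: t) : s ≤ t :=
  le_of_not_gt h.le

theorem append_lt_append_of_lt_of_not_isPrefix :
    ∀ {s t : List α}, s < t → ¬ s <+: t → ∀ p q : List α, s ++ p < t ++ q
  | _, _, .nil, hst, _, _ => absurd nil_prefix hst
  | _, _, .cons h, hst, p, q =>
    Lex.cons (append_lt_append_of_lt_of_not_isPrefix h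
      (fun h' => hst (cons_prefix_cons.2 ⟨rfl, h'⟩)) p q)
  | _, _, .rel h, _, _, _ => Lex.rel h

end List

section

open List

variable {α : Type*} [LinearOrder α]

namespace IsLyndon

theorem singleton (a : α) : IsLyndon [a] :=
  ⟨cons_ne_nil a [], fun i hi hlen => by simp at hlen; omega⟩

theorem lt_of_isSuffix {w s : List α} (hw : IsLyndon w) (hs : s <:+ w) (hne : s ≠ [])
    (hlen : s.length < w.length) : w < s := by
  obtain ⟨c, rfl⟩ := hs
  have hc : 0 < c.length := by simp only [length_append] at hlen; omega
  have hs : 0 < s.length := length_pos_iff.2 hne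
  simpa using hw.2 c.length hc (by simp only [length_append]; omega)

theorem append_lt {u v : List α} (hv : IsLyndon v) (hu : u ≠ []) (huv : u < v) : u ++ v < v := by
  by_cases hpre : u <+: v
  · obtain ⟨w, rfl⟩ := hpre
    have hw : w ≠ [] := by rintro rfl; simp at huv
    have hlen : w.length < (u ++ w).length := by
      simp only [length_append]; have := length_pos_iff.2 hu; omega
    exact Lex.append_left _ (hv.lt_of_isSuffix (suffix_append u w) hw hlen) u
  · simpa using append_lt_append_of_lt_of_not_isPrefix huv hpre v []

theorem append_s11 {u v : List α} (hu : IsLyndon u) (hv : IsLyndon v) (huv : u < v) :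
    IsLyndon (u ++ v) := by
  have huv_v : u ++ v < v := hv.append_lt hu.1 huv
  refine ⟨by simp [hu.1], fun i hi hlen => ?_⟩
  simp only [length_append] at hlen
  rcases lt_trichotomy i u.length with hiu | rfl | hiu
  · have hnpre : ¬ u <+: u.drop i := fun h => by have := h.length_le; simp at this; omega
    rw [drop_append_of_le_length hiu.le]
    exact append_lt_append_of_lt_of_not_isPrefix (hu.2 i hi hiu) hnpre v v
  · simpa using huv_v
  · obtain ⟨j, rfl⟩ := Nat.exists_eq_add_of_lt hiu
    rw [Nat.add_assoc, drop_length_add_append]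
    exact huv_v.trans (hv.2 (j + 1) (by omega) (by omega))

end IsLyndon

def IsLyndonFactorization (L : List (List α)) : Prop :=
  (∀ w ∈ L, IsLyndon w) ∧ L.IsChain (fun a b => b ≤ a)

namespace IsLyndonFactorization

theorem exists_flatten_eq_append {u : List α} (hu : IsLyndon u) :
    ∀ {L : List (List α)}, IsLyndonFactorization L →
      ∃ L', IsLyndonFactorization L' ∧ L'.flatten = u ++ L.flatten
  | [], _ => ⟨[u], ⟨by simpa using hu, isChain_singleton u⟩, by simp⟩
  | v :: L, ⟨hly, hchain⟩ => by
    by_cases hvu : v ≤ u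
    · refine ⟨u :: v :: L, ⟨?_, isChain_cons_cons.2 ⟨hvu, hchain⟩⟩, rfl⟩
      simpa [hu] using hly
    · have huv : IsLyndon (u ++ v) := hu.append_s11 (hly v mem_cons_self) (not_le.1 hvu)
      obtain ⟨L', hL', hflat⟩ := exists_flatten_eq_append huv
        ⟨fun w hw => hly w (mem_cons_of_mem v hw), hchain.tail⟩
      exact ⟨L', hL', by simp [hflat]⟩

theorem exists_flatten_eq : ∀ x : List α, ∃ L, IsLyndonFactorization L ∧ L.flatten = x
  | [] => ⟨[], ⟨by simp, isChain_nil⟩, rfl⟩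
  | a :: x => by
    obtain ⟨L, hL, rfl⟩ := exists_flatten_eq x
    exact exists_flatten_eq_append (IsLyndon.singleton a) hL

theorem length_le_head_of_isPrefix {u : List α} {L : List (List α)}
    (h : IsLyndonFactorization (u :: L)) {p : List α} (hp : IsLyndon p)
    (hpre : p <+: (u :: L).flatten) : p.length ≤ u.length := by
  by_contra! hlt
  have hu : IsLyndon u := h.1 u mem_cons_self
  obtain ⟨q, rfl⟩ := prefix_of_prefix_length_le (prefix_append u L.flatten) hpre hlt.le
  have hq : q ≠ [] := by rintro rfl; simp at hlt
  obtain ⟨w, hw, w', hw'ne, hw'w, hw'q⟩ :=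
    exists_isPrefix_isSuffix_of_isPrefix_flatten ((prefix_append_right_inj u).1 hpre) hq
  have hw'len : w'.length < (u ++ q).length := by
    have := hw'q.length_le; have := length_pos_iff.2 hu.1; simp only [length_append]; omega
  have hwu : w ≤ u := (pairwise_cons.1 (isChain_iff_pairwise.1 h.2)).1 w hw
  exact lt_irrefl _ <| calc
    u ++ q < w' := hp.lt_of_isSuffix (hw'q.trans (suffix_append u q)) hw'ne hw'len
    _ ≤ w := le_of_isPrefix hw'w
    _ ≤ u := hwu
    _ ≤ u ++ q := le_of_isPrefix (prefix_append u q)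

theorem eq_of_flatten_eq :
    ∀ {L M : List (List α)}, IsLyndonFactorization L → IsLyndonFactorization M →
      L.flatten = M.flatten → L = M
  | [], [], _, _, _ => rfl
  | [], v :: _, _, hM, h | v :: _, [], hM, _, h => by
    have := (hM.1 v mem_cons_self).1
    simp_all
  | u :: L, v :: M, hL, hM, h => by
    have hu : u <+: (v :: M).flatten := h ▸ prefix_append u L.flatten
    have hv : v <+: (u :: L).flatten := h ▸ prefix_append v M.flatten
    have huv := hM.length_le_head_of_isPrefix (hL.1 u mem_cons_self) hu
    have hvu := hL.length_le_head_of_isPrefix (hM.1 v mem_cons_self) hv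
    have hpre : u <+: v := prefix_of_prefix_length_le hu (prefix_append v _) huv
    obtain rfl := hpre.eq_of_length (le_antisymm huv hvu)
    have hrest : L.flatten = M.flatten := by simpa using h
    rw [eq_of_flatten_eq ⟨fun w hw => hL.1 w (mem_cons_of_mem u hw), hL.2.tail⟩
      ⟨fun w hw => hM.1 w (mem_cons_of_mem u hw), hM.2.tail⟩ hrest]

end IsLyndonFactorization

end

theorem unique_lyndon_factorization_general {A : Type*} [LinearOrder A]
    (x : List A) :
    ∃! L : List (List A),
      L.flatten = x ∧ (∀ w ∈ L, IsLyndon w) ∧ L.Chain' (fun a b => b ≤ a) := by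
  obtain ⟨L, hL, rfl⟩ := IsLyndonFactorization.exists_flatten_eq x
  exact ⟨L, ⟨rfl, hL⟩, fun M ⟨hflat, hM⟩ => IsLyndonFactorization.eq_of_flatten_eq hM hL hflat⟩

theorem unique_lyndon_factorization {A : Type*} [LinearOrder A]
    (x : List A) (hx : x ≠ []) :
    ∃! L : List (List A),
      L.flatten = x ∧ (∀ w ∈ L, IsLyndon w) ∧ L.Chain' (fun a b => b ≤ a) :=
  unique_lyndon_factorization_general x
end

section
/- Let (u_n)_{n<ω} be a sequence of nonempty finite words such that every finite product u₀u₁⋯u_n is a Lyndon word. Then the infinite word w = u₀u₁u₂⋯ satisfies w ≤lex z for every proper suffix z of w (where ≤lex is the lexicographic order on infinite words). -/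
/-- Lexicographic (non-strict) order on infinite words. -/
def InfLe {A : Type*} [LinearOrder A] (w z : ℕ → A) : Prop :=
  w = z ∨ ∃ n : ℕ, (∀ m < n, w m = z m) ∧ w n < z n

namespace List

variable {α : Type*}

theorem length_le_length_flatten {L : List (List α)} (hL : ∀ l ∈ L, l ≠ []) :
    L.length ≤ L.flatten.length := by
  rw [length_flatten, ← length_map (f := length)]
  refine length_le_sum_of_one_le _ fun n hn => ?_
  obtain ⟨l, hl, rfl⟩ := mem_map.mp hn
  exact length_pos_iff.mpr (hL l hl)

theorem exists_getElem_lt_of_lt_drop [LT α] {l : List α} {k : ℕ} (h : l < l.drop k) :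
    ∃ j, ∃ hj : j + k < l.length, (∀ i (hi : i < j), l[i] = l[i + k]) ∧ l[j] < l[j + k] := by
  rcases List.lt_iff_exists.mp h with ⟨-, hlen⟩ | ⟨j, _, hj, heq, hlt⟩
  · simp only [length_drop] at hlen
    omega
  · simp only [length_drop] at hj
    refine ⟨j, by omega, fun i hi => ?_, ?_⟩
    · simpa [Nat.add_comm] using heq i hi
    · simpa [Nat.add_comm] using hlt

end List

theorem infLe_shift_of_lt_drop {A : Type*} [LinearOrder A] {w : ℕ → A} {P : List A}
    (hwP : ∀ i (h : i < P.length), w i = P[i]) {k : ℕ} (hP : P < P.drop k) :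
    InfLe w (fun n => w (n + k)) := by
  obtain ⟨j, hj, heq, hlt⟩ := List.exists_getElem_lt_of_lt_drop hP
  refine Or.inr ⟨j, fun i hi => ?_, ?_⟩ <;> dsimp only
  · rw [hwP i (by omega), hwP (i + k) (by omega), heq i hi]
  · rwa [hwP j (by omega), hwP (j + k) hj]

theorem limit_of_lyndon_le_suffixes {A : Type*} [LinearOrder A]
    (u : ℕ → List A) (w : ℕ → A)
    (hne : ∀ n, u n ≠ [])
    (hly : ∀ n, IsLyndon (((List.range (n + 1)).map u).flatten))
    (hw : ∀ n, ∀ i : ℕ, (h : i < (((List.range n).map u).flatten).length) →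
      w i = (((List.range n).map u).flatten).get ⟨i, h⟩) :
    ∀ k : ℕ, 1 ≤ k → InfLe w (fun n => w (n + k)) := by
  intro k hk
  have hlen : k + 1 ≤ (((List.range (k + 1)).map u).flatten).length := by
    simpa using List.length_le_length_flatten (L := (List.range (k + 1)).map u)
      (List.forall_mem_map.2 fun n _ => hne n)
  exact infLe_shift_of_lt_drop (fun i h => hw (k + 1) i h) ((hly k).2 k hk hlen)
end

section
/- Let x and y be finite words over a linearly ordered alphabet such that the finite word xy² is a Lyndon word. Then the infinite word x·y^ω (x followed by infinitely many copies of y) is lexicographically less than or equal to every proper suffix of itself. -/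
/-!
Beyond `x`, the word `w = x·y^ω` is `|y|`-periodic, so every shift of `w` equals a shift by some
`k < |x| + |y| < |xy²|`. For such `k` the Lyndon property gives `xy² < (xy²)[k:]`; as the suffix
is the shorter word, this comparison is decided by a genuine mismatch inside it, and `w` and its
`k`-shift begin with these two words, so the same mismatch decides `w ≤ shift`.
-/

open Function

section
variable {A : Type*}

def IsPrefixOfInf (u : List A) (w : ℕ → A) : Prop :=
  ∀ i (hi : i < u.length), w i = u[i]

lemma IsPrefixOfInf.append {u v : List A} {w : ℕ → A} (hu : IsPrefixOfInf u w)
    (hv : IsPrefixOfInf v fun n => w (n + u.length)) : IsPrefixOfInf (u ++ v) w := by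
  intro i hi
  rw [List.getElem_append]
  split_ifs with h
  · exact hu i h
  · rw [List.length_append] at hi
    simpa [Nat.sub_add_cancel (not_lt.mp h)] using hv (i - u.length) (by omega)

lemma IsPrefixOfInf.drop {u : List A} {w : ℕ → A} (hu : IsPrefixOfInf u w) (k : ℕ) :
    IsPrefixOfInf (u.drop k) fun n => w (n + k) := by
  intro i hi
  rw [List.length_drop] at hi
  rw [List.getElem_drop, ← hu (k + i) (by omega), add_comm]

lemma IsPrefixOfInf.append_self_of_periodic {u : List A} {w : ℕ → A} (hu : IsPrefixOfInf u w)
    (hper : Periodic w u.length) : IsPrefixOfInf (u ++ u) w :=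
  hu.append (by rwa [show (fun n => w (n + u.length)) = w from funext hper])

lemma exists_lt_shift_eq_of_periodic {w : ℕ → A} {p q : ℕ} (hq : 0 < q)
    (hper : Periodic (fun n => w (n + p)) q) (k : ℕ) :
    ∃ k' < p + q, (fun n => w (n + k)) = fun n => w (n + k') := by
  rcases lt_or_ge k p with hk | hk
  · exact ⟨k, by omega, rfl⟩
  refine ⟨p + (k - p) % q, by have := Nat.mod_lt (k - p) hq; omega, funext fun n => ?_⟩
  calc w (n + k) = w (n + (k - p) + p) := by congr 1; omega
    _ = w (n + (k - p) % q + p) := ((hper.const_add n).map_mod_nat (k - p)).symm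
    _ = w (n + (p + (k - p) % q)) := by congr 1; omega

variable [LinearOrder A]

lemma infLe_of_lt {u v : List A} {w z : ℕ → A} (huv : u < v) (hlen : v.length ≤ u.length)
    (hw : IsPrefixOfInf u w) (hz : IsPrefixOfInf v z) : InfLe w z := by
  obtain ⟨-, hlt⟩ | ⟨i, hiu, hiv, hagree, hi⟩ := List.lt_iff_exists.mp huv
  · omega
  refine Or.inr ⟨i, fun j hj => ?_, ?_⟩
  · rw [hw j (hj.trans hiu), hz j (hj.trans hiv), hagree j hj]
  · rwa [hw i hiu, hz i hiv]

lemma IsLyndon.infLe_shift {u : List A} (hu : IsLyndon u) {w : ℕ → A} (hw : IsPrefixOfInf u w)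
    {k : ℕ} (hk : k < u.length) : InfLe w fun n => w (n + k) := by
  rcases Nat.eq_zero_or_pos k with rfl | hk0
  · exact Or.inl rfl
  · exact infLe_of_lt (hu.2 k hk0 hk) (by simp) hw (hw.drop k)

end

theorem lyndon_xyy_periodic_le_suffixes {A : Type*} [LinearOrder A]
    (x y : List A) (hy : y ≠ [])
    (h : IsLyndon (x ++ y ++ y)) (w : ℕ → A)
    (hw : ∀ n : ℕ,
      (∀ hn : n < x.length, w n = x.get ⟨n, hn⟩) ∧
      (x.length ≤ n →
        w n = y.get ⟨(n - x.length) % y.length,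
          Nat.mod_lt _ (List.length_pos_of_ne_nil hy)⟩)) :
    ∀ k : ℕ, 1 ≤ k → InfLe w (fun n => w (n + k)) := by
  intro k _
  have hylen : 0 < y.length := List.length_pos_of_ne_nil hy
  have htail : ∀ n, w (n + x.length) = y[n % y.length]'(Nat.mod_lt _ hylen) := fun n => by
    simpa using (hw (n + x.length)).2 (by omega)
  have hper : Periodic (fun n => w (n + x.length)) y.length := fun n => by
    simp only [htail, Nat.add_mod_right]
  have hy_pre : IsPrefixOfInf y fun n => w (n + x.length) := fun i hi => by
    simp only [htail, Nat.mod_eq_of_lt hi]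
  have hpre : IsPrefixOfInf (x ++ y ++ y) w := by
    rw [List.append_assoc]
    exact IsPrefixOfInf.append (fun i hi => (hw i).1 hi) (hy_pre.append_self_of_periodic hper)
  obtain ⟨k', hk', hshift⟩ := exists_lt_shift_eq_of_periodic hylen hper k
  rw [hshift]
  exact h.infLe_shift hpre (by simp only [List.length_append]; omega)
end

section
/- Let u be a finite Lyndon word, and let xa be a prefix of u where x is a word and a is a letter. If b is a letter with a < b, then xb is a Lyndon word and u <lex xb. -/
theorem List.append_singleton_lt_of_lt_append_cons {A : Type*} [Preorder A]
    {s s' t t' : List A} {a b : A} (hlen : s'.length < s.length)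
    (h : s ++ t < s' ++ a :: t') (hab : a < b) : s ++ [b] < s' ++ [b] := by
  induction s' generalizing s with
  | nil =>
    obtain _ | ⟨c, s⟩ := s
    · simp at hlen
    · have hca : c ≤ a := by
        rcases List.cons_lt_cons_iff.mp h with hlt | ⟨rfl, -⟩
        exacts [hlt.le, le_rfl]
      exact List.Lex.rel (hca.trans_lt hab)
  | cons c' s' ih =>
    obtain _ | ⟨c, s⟩ := s
    · simp at hlen
    · rcases List.cons_lt_cons_iff.mp h with hlt | ⟨rfl, htail⟩
      · exact List.Lex.rel hlt
      · exact List.Lex.cons (ih (by simpa using hlen) htail)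

theorem lyndon_prefix_increase_letter {A : Type*} [LinearOrder A]
    (u x : List A) (a b : A)
    (hu : IsLyndon u) (hpre : (x ++ [a]) <+: u) (hab : a < b) :
    IsLyndon (x ++ [b]) ∧ u < x ++ [b] := by
  obtain ⟨t, rfl⟩ := hpre
  rw [List.append_assoc, List.singleton_append] at hu ⊢
  refine ⟨⟨by simp, fun i hi hi_len => ?_⟩, List.append_left_lt (List.Lex.rel hab)⟩
  have hix : i ≤ x.length := by simpa [Nat.lt_succ_iff] using hi_len
  have hu_i := hu.2 i hi (by simp; omega)
  rw [List.drop_append_of_le_length hix] at hu_i ⊢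
  exact List.append_singleton_lt_of_lt_append_cons (by simp; omega) hu_i hab
end

section
/- Let x be an infinite word (indexed by ℕ) over a linearly ordered alphabet such that x ≤lex z for every proper suffix z of x, and assume x is not of the form y^ω for any finite word y. Then x <lex z for every proper suffix z of x. -/
theorem le_suffixes_not_periodic_lt_suffixes {A : Type*} [LinearOrder A]
    (x : ℕ → A)
    (hle : ∀ k : ℕ, 1 ≤ k → InfLe x (fun n => x (n + k)))
    (hnp : ¬ ∃ y : List A, y ≠ [] ∧ ∀ n : ℕ, y[n % y.length]? = some (x n)) :
    ∀ k : ℕ, 1 ≤ k → InfLe x (fun n => x (n + k)) ∧ x ≠ (fun n => x (n + k)) := by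
  intro k hk
  refine ⟨hle k hk, ?_⟩
  intro heq
  apply hnp
  have hper : ∀ n, x (n + k) = x n := fun n => (congrFun heq n).symm
  have hmul : ∀ q r, x (r + q * k) = x r := by
    intro q
    induction q with
    | zero => simp
    | succ q ih =>
      intro r
      have : r + (q + 1) * k = (r + q * k) + k := by ring
      rw [this, hper, ih]
  refine ⟨List.ofFn (fun i : Fin k => x i), by simp; omega, ?_⟩
  intro n
  have hlen : (List.ofFn (fun i : Fin k => x i)).length = k := by simp
  rw [hlen]
  have hlt : n % k < k := Nat.mod_lt _ (by omega)
  rw [List.getElem?_ofFn]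
  simp only [hlen, hlt, dif_pos]
  congr 1
  conv_rhs => rw [← Nat.mod_add_div n k]
  rw [Nat.mul_comm]; exact (hmul (n / k) (n % k)).symm
end

section
/- Let u₁, …, u_n be finite Lyndon words and a₁, …, a_n positive natural numbers. Then there exists an index 1 ≤ k ≤ n, a finite Lyndon word v, and a positive natural number β such that v^β equals the cyclic rotation u_{k+1}^{a_{k+1}} ⋯ u_n^{a_n} u₁^{a₁} ⋯ u_k^{a_k} of the product, and v ≤lex u_k. -/
/-- `pw w m` is the `m`-fold concatenation of `w`. -/
def pw {A : Type*} (w : List A) (m : ℕ) : List A :=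
  (List.replicate m w).flatten

set_option linter.unusedSectionVars false
namespace CF
variable {A : Type*} [LinearOrder A]

lemma pw_zero (w : List A) : pw w 0 = [] := by simp [pw]
lemma pw_one (w : List A) : pw w 1 = w := by simp [pw]
lemma pw_succ (w : List A) (m : ℕ) : pw w (m+1) = w ++ pw w m := by
  simp [pw, List.replicate_succ]
lemma pw_succ' (w : List A) (m : ℕ) : pw w (m+1) = pw w m ++ w := by
  simp [pw, List.replicate_succ']
lemma pw_add (w : List A) (m n : ℕ) : pw w (m+n) = pw w m ++ pw w n := by
  unfold pw; rw [List.replicate_add, List.flatten_append]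
lemma pw_ne_nil {w : List A} (hw : w ≠ []) {m : ℕ} (hm : 0 < m) : pw w m ≠ [] := by
  obtain ⟨c, rfl⟩ : ∃ c, m = c + 1 := ⟨m - 1, by omega⟩
  rw [pw_succ]; simp [hw]

lemma lex_append_left_strict (l : List A) {x : List A} (hx : x ≠ []) : l < l ++ x := by
  show List.Lex (· < ·) l (l ++ x)
  induction l with
  | nil =>
    cases x with
    | nil => exact absurd rfl hx
    | cons b t => exact List.Lex.nil
  | cons a t ih => exact List.Lex.cons ih

lemma lex_append_of_not_prefix : ∀ {l₁ l₂ : List A}, List.Lex (· < ·) l₁ l₂ → ¬ l₁ <+: l₂ →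
    ∀ x y : List A, List.Lex (· < ·) (l₁ ++ x) (l₂ ++ y)
  | _, _, List.Lex.nil, hp, _, _ => absurd (List.nil_prefix) hp
  | _, _, List.Lex.rel h, _, _, _ => List.Lex.rel h
  | _, _, @List.Lex.cons _ _ a l₁ l₂ h, hp, x, y =>
    List.Lex.cons (lex_append_of_not_prefix h
      (fun hpp => hp (List.cons_prefix_cons.mpr ⟨rfl, hpp⟩)) x y)

lemma lt_append_of_not_prefix {l₁ l₂ : List A} (h : l₁ < l₂) (hp : ¬ l₁ <+: l₂)
    (x y : List A) : l₁ ++ x < l₂ ++ y :=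
  lex_append_of_not_prefix h hp x y

lemma lt_append_left {x y : List A} (h : x < y) (l : List A) : l ++ x < l ++ y :=
  List.Lex.append_left _ h l

lemma lyndon_suffix_lt {X y : List A} (h : IsLyndon (X ++ y)) (hX : X ≠ []) (hy : y ≠ []) :
    X ++ y < y := by
  have h2 := h.2 X.length (by simpa [List.length_pos_iff] using hX)
    (by simp [List.length_pos_iff.mpr hy])
  simpa using h2

lemma append_lt {l m : List A} (hl : IsLyndon l) (hm : IsLyndon m) (hlm : l < m) :
    l ++ m < m := by
  by_cases hp : l <+: m
  · obtain ⟨t, rfl⟩ := hp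
    have ht : t ≠ [] := by rintro rfl; simp at hlm
    have hmt : l ++ t < t := by
      have := hm.2 l.length (by simpa [List.length_pos_iff] using hl.1)
        (by simp [List.length_pos_iff.mpr ht])
      simpa using this
    exact lt_append_left hmt l
  · have := lt_append_of_not_prefix hlm hp m []
    simpa using this

lemma isLyndon_append {l m : List A} (hl : IsLyndon l) (hm : IsLyndon m) (hlm : l < m) :
    IsLyndon (l ++ m) := by
  refine ⟨by simp [hl.1], ?_⟩
  intro i hi0 hilen
  rcases lt_trichotomy i l.length with hc | hc | hc
  · have hdrop : (l ++ m).drop i = l.drop i ++ m := by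
      rw [List.drop_append, Nat.sub_eq_zero_of_le hc.le, List.drop_zero]
    rw [hdrop]
    have h1 : l < l.drop i := hl.2 i hi0 hc
    have hnp : ¬ l <+: l.drop i := by
      intro hpp
      have := hpp.length_le
      simp [List.length_drop] at this
      omega
    exact lt_append_of_not_prefix h1 hnp m m
  · subst hc
    rw [List.drop_left]
    exact append_lt hl hm hlm
  · have hdrop : (l ++ m).drop i = m.drop (i - l.length) := by
      rw [List.drop_append, List.drop_eq_nil_of_le (le_of_lt hc), List.nil_append]
    rw [hdrop]
    have h1 : m < m.drop (i - l.length) := by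
      apply hm.2 (i - l.length) (by omega)
      simp [List.length_append] at hilen
      omega
    exact lt_trans (append_lt hl hm hlm) h1

lemma isLyndon_l_pw {l m : List A} (hl : IsLyndon l) (hm : IsLyndon m) (hlm : l < m) :
    ∀ b : ℕ, 0 < b → IsLyndon (l ++ pw m b) ∧ l ++ pw m b < m := by
  intro b hb
  induction b, hb using Nat.le_induction with
  | base => rw [pw_one]; exact ⟨isLyndon_append hl hm hlm, append_lt hl hm hlm⟩
  | succ b hb ih =>
    have heq : l ++ pw m (b+1) = (l ++ pw m b) ++ m := by rw [pw_succ', List.append_assoc]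
    constructor
    · rw [heq]; exact isLyndon_append ih.1 hm ih.2
    · rw [heq]; exact append_lt ih.1 hm ih.2

lemma isLyndon_pw_pw {u w : List A} (hu : IsLyndon u) (hw : IsLyndon w) (huw : u < w)
    {a b : ℕ} (ha : 0 < a) (hb : 0 < b) : IsLyndon (pw u a ++ pw w b) := by
  induction a, ha using Nat.le_induction with
  | base => rw [pw_one]; exact (isLyndon_l_pw hu hw huw b hb).1
  | succ a ha ih =>
    have heq : pw u (a+1) ++ pw w b = u ++ (pw u a ++ pw w b) := by
      rw [pw_succ, List.append_assoc]
    rw [heq]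
    apply isLyndon_append hu ih
    obtain ⟨c, rfl⟩ : ∃ c, a = c + 1 := ⟨a - 1, by omega⟩
    rw [pw_succ, List.append_assoc]
    apply lex_append_left_strict
    simp [pw_ne_nil hw.1 hb]

lemma pw_pw_lt {u w : List A} (hu : IsLyndon u) (hw : IsLyndon w) (huw : u < w)
    {a b : ℕ} (ha : 0 < a) (hb : 0 < b) : pw u a ++ pw w b < w := by
  have hL := isLyndon_pw_pw hu hw huw ha hb
  obtain ⟨c, rfl⟩ : ∃ c, b = c + 1 := ⟨b - 1, by omega⟩
  have heq : pw u a ++ pw w (c+1) = (pw u a ++ pw w c) ++ w := by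
    rw [pw_succ', List.append_assoc]
  rw [heq] at hL ⊢
  exact lyndon_suffix_lt hL (by simp [pw_ne_nil hu.1 ha]) hw.1

def blk (p : List A × ℕ) : List A := pw p.1 p.2

def good (L : List (List A × ℕ)) : Prop := ∀ p ∈ L, IsLyndon p.1 ∧ 0 < p.2

def result (L : List (List A × ℕ)) : Prop :=
  ∃ (P S : List (List A × ℕ)) (x : List A × ℕ) (v : List A) (β : ℕ),
    L = P ++ x :: S ∧ IsLyndon v ∧ 0 < β ∧
    pw v β = (S.map blk).flatten ++ (P.map blk).flatten ++ blk x ∧ v ≤ x.1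

lemma flat_const (w : List A) : ∀ L : List (List A × ℕ), (∀ p ∈ L, p.1 = w) →
    (L.map blk).flatten = pw w (L.map Prod.snd).sum
  | [], _ => by simp [pw_zero]
  | p :: T, h => by
    have h1 : p.1 = w := h p (by simp)
    simp only [List.map_cons, List.flatten_cons, List.sum_cons]
    rw [flat_const w T (fun q hq => h q (by simp [hq])), pw_add, blk, h1]

lemma result_rotate (L₁ L₂ : List (List A × ℕ)) (h : result (L₂ ++ L₁)) :
    result (L₁ ++ L₂) := by
  obtain ⟨P, S, x, v, β, hdec, hv, hβ, heq, hle⟩ := h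
  rcases List.append_eq_append_iff.mp hdec.symm with ⟨a', ha1, ha2⟩ | ⟨c', hc1, hc2⟩
  · cases a' with
    | nil =>
      simp only [List.append_nil] at ha1
      simp only [List.nil_append] at ha2
      rw [← ha1] at heq
      refine ⟨[], S ++ L₂, x, v, β, by simp [← ha2], hv, hβ, ?_, hle⟩
      simpa [List.map_append, List.flatten_append, List.append_assoc] using heq
    | cons r a'' =>
      obtain ⟨he1, he2⟩ : x = r ∧ S = a'' ++ L₁ := by simpa using ha2
      rw [he2] at heq
      refine ⟨L₁ ++ P, a'', x, v, β, by rw [ha1, he1]; simp, hv, hβ, ?_, hle⟩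
      simpa [List.map_append, List.flatten_append, List.append_assoc] using heq
  · rw [hc1] at heq
    refine ⟨c', S ++ L₂, x, v, β, by rw [hc2]; simp, hv, hβ, ?_, hle⟩
    simpa [List.map_append, List.flatten_append, List.append_assoc] using heq

lemma merge_step (N : ℕ)
    (IH : ∀ M : List (List A × ℕ), M.length ≤ N → M ≠ [] → good M → result M)
    (P₁ S₁ : List (List A × ℕ)) (p q : List A × ℕ)
    (hg : good (P₁ ++ p :: q :: S₁))
    (hlen : (P₁ ++ p :: q :: S₁).length ≤ N + 1)
    (h12 : p.1 < q.1) : result (P₁ ++ p :: q :: S₁) := by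
  have h1 := hg p (by simp)
  have h2 := hg q (by simp)
  obtain ⟨e, he⟩ : ∃ e : List A × ℕ, e = (pw p.1 p.2 ++ pw q.1 q.2, 1) := ⟨_, rfl⟩
  have hLy : IsLyndon e.1 := by rw [he]; exact isLyndon_pw_pw h1.1 h2.1 h12 h1.2 h2.2
  have hlt : e.1 < q.1 := by rw [he]; exact pw_pw_lt h1.1 h2.1 h12 h1.2 h2.2
  have hgood' : good (P₁ ++ e :: S₁) := by
    intro r hr
    simp only [List.mem_append, List.mem_cons] at hr
    rcases hr with h | h | h
    · exact hg r (by simp [h])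
    · subst h; exact ⟨hLy, by rw [he]; exact one_pos⟩
    · exact hg r (by simp [h])
  have hres := IH (P₁ ++ e :: S₁) (by simp at hlen ⊢; omega) (by simp) hgood'
  obtain ⟨P', S', x', v, β, hdec, hv, hβ, heq, hle⟩ := hres
  have hblk : blk e = blk p ++ blk q := by simp [blk, he, pw_one]
  rcases List.append_eq_append_iff.mp hdec with ⟨a', ha1, ha2⟩ | ⟨c', hc1, hc2⟩
  · cases a' with
    | nil =>
      simp only [List.append_nil] at ha1
      simp only [List.nil_append] at ha2
      obtain ⟨he1, he2⟩ : e = x' ∧ S₁ = S' := by simpa using ha2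
      rw [ha1, ← he2, ← he1] at heq
      rw [← he1] at hle
      refine ⟨P₁ ++ [p], S₁, q, v, β, by simp, hv, hβ, ?_,
        le_of_lt (lt_of_le_of_lt hle hlt)⟩
      simpa [hblk, List.map_append, List.flatten_append, List.append_assoc] using heq
    | cons r a'' =>
      obtain ⟨he1, he2⟩ : e = r ∧ S₁ = a'' ++ x' :: S' := by simpa using ha2
      rw [ha1, ← he1] at heq
      refine ⟨P₁ ++ p :: q :: a'', S', x', v, β, by rw [he2]; simp, hv, hβ, ?_, hle⟩
      simpa [hblk, List.map_append, List.flatten_append, List.append_assoc] using heq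
  · cases c' with
    | nil =>
      simp only [List.append_nil] at hc1
      simp only [List.nil_append] at hc2
      obtain ⟨he1, he2⟩ : x' = e ∧ S' = S₁ := by simpa using hc2
      rw [he2, he1, ← hc1] at heq
      rw [he1] at hle
      refine ⟨P₁ ++ [p], S₁, q, v, β, by simp, hv, hβ, ?_,
        le_of_lt (lt_of_le_of_lt hle hlt)⟩
      simpa [hblk, List.map_append, List.flatten_append, List.append_assoc] using heq
    | cons r c'' =>
      obtain ⟨he1, he2⟩ : x' = r ∧ c'' ++ e :: S₁ = S' := by
        have h' := hc2.symm
        simp only [List.cons_append, List.cons.injEq] at h'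
        exact ⟨h'.1.symm, h'.2⟩
      refine ⟨P', c'' ++ p :: q :: S₁, x', v, β, by rw [hc1, he1]; simp, hv, hβ, ?_, hle⟩
      rw [← he2] at heq
      simpa [hblk, List.map_append, List.flatten_append, List.append_assoc] using heq

lemma keylist : ∀ (N : ℕ) (L : List (List A × ℕ)), L.length ≤ N → L ≠ [] → good L →
    result L := by
  intro N
  induction N with
  | zero =>
    intro L hL hne _
    exact absurd (List.length_eq_zero_iff.mp (Nat.le_zero.mp hL)) hne
  | succ N IH =>
    intro L hL hne hg
    by_cases hE : ∃ i, ∃ h : i + 1 < L.length, (L[i]'(by omega)).1 < (L[i+1]'h).1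
    · obtain ⟨i, hi, hlt⟩ := hE
      have hdec : L = L.take i ++ (L[i]'(by omega)) :: (L[i+1]'hi) :: L.drop (i+1+1) := by
        conv_lhs => rw [← List.take_append_drop i L]
        congr 1
        rw [List.drop_eq_getElem_cons (show i < L.length by omega),
          List.drop_eq_getElem_cons hi]
      rw [hdec] at hg hL ⊢
      exact merge_step N IH _ _ _ _ hg hL hlt
    · push_neg at hE
      have h0 : 0 < L.length := List.length_pos_iff.mpr hne
      have hmono : ∀ i j (_ : i ≤ j) (hj : j < L.length),
          (L[j]'hj).1 ≤ (L[i]'(by omega)).1 := by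
        intro i j hij
        induction j, hij using Nat.le_induction with
        | base => intro hj; exact le_refl _
        | succ j hj ihj =>
          intro h
          exact le_trans (hE j h) (ihj (by omega))
      by_cases hrot : (L[L.length - 1]'(by omega)).1 < (L[0]'h0).1
      · obtain ⟨x₀, T, rfl⟩ : ∃ x₀ T, L = x₀ :: T := by
          cases L with
          | nil => exact absurd rfl hne
          | cons a t => exact ⟨a, t, rfl⟩
        have hT : T ≠ [] := by
          rintro rfl
          simp at hrot
        obtain ⟨T', t, rfl⟩ : ∃ T' t, T = T' ++ [t] := by
          rcases List.eq_nil_or_concat T with h | ⟨T', t, h⟩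
          · exact absurd h hT
          · exact ⟨T', t, by simpa using h⟩
        have h12 : t.1 < x₀.1 := by
          have hgl : ((x₀ :: (T' ++ [t]))[(x₀ :: (T' ++ [t])).length - 1]'(by omega)) =
              (x₀ :: (T' ++ [t])).getLast (by simp) := (List.getLast_eq_getElem _).symm
          rw [hgl] at hrot
          simpa [List.getLast_append] using hrot
        have hgood2 : good (T' ++ t :: x₀ :: []) := by
          intro r hr
          apply hg
          simp only [List.mem_append, List.mem_cons, List.mem_singleton,
            List.not_mem_nil] at hr ⊢
          tauto
        have hlen2 : (T' ++ t :: x₀ :: []).length ≤ N + 1 := by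
          simp at hL ⊢
          omega
        have hres2 : result (T' ++ t :: x₀ :: []) :=
          merge_step N IH T' [] t x₀ hgood2 hlen2 h12
        have hres3 : result ((T' ++ [t]) ++ [x₀]) := by
          rw [show (T' ++ [t]) ++ [x₀] = T' ++ t :: x₀ :: [] from by simp]
          exact hres2
        have hres4 := result_rotate [x₀] (T' ++ [t]) hres3
        simpa using hres4
      · have hle0 : (L[0]'h0).1 ≤ (L[L.length-1]'(by omega)).1 := le_of_not_gt hrot
        have heqall : ∀ i (hi : i < L.length), (L[i]'hi).1 = (L[0]'h0).1 := by
          intro i hi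
          have ha : (L[i]'hi).1 ≤ (L[0]'h0).1 := hmono 0 i (by omega) hi
          have hb : (L[L.length-1]'(by omega)).1 ≤ (L[i]'hi).1 :=
            hmono i (L.length-1) (by omega) (by omega)
          exact le_antisymm ha (le_trans hle0 hb)
        have hallw : ∀ p ∈ L, p.1 = (L[0]'h0).1 := by
          intro p hp
          obtain ⟨i, hi, rfl⟩ := List.mem_iff_getElem.mp hp
          exact heqall i hi
        have hflat : (L.dropLast.map blk).flatten ++ blk (L.getLast hne) =
            (L.map blk).flatten := by
          conv_rhs => rw [← List.dropLast_append_getLast hne]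
          simp [List.map_append, List.flatten_append]
        refine ⟨L.dropLast, [], L.getLast hne, (L[0]'h0).1, (L.map Prod.snd).sum,
          (List.dropLast_append_getLast hne).symm, ?_, ?_, ?_, ?_⟩
        · exact (hg (L[0]'h0) (List.getElem_mem h0)).1
        · cases L with
          | nil => exact absurd rfl hne
          | cons a T =>
            have := (hg a (by simp)).2
            simp only [List.map_cons, List.sum_cons]
            omega
        · simp only [List.map_nil, List.flatten_nil, List.nil_append]
          rw [hflat, flat_const _ L hallw]
        · have hgl : L.getLast hne = L[L.length-1]'(by omega) :=
            List.getLast_eq_getElem _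
          rw [hgl]
          exact hle0

lemma take_range {m n : ℕ} (h : m ≤ n) : (List.range n).take m = List.range m := by
  apply List.ext_getElem
  · simp [h]
  · intro i h1 h2
    simp

lemma drop_range (m n : ℕ) : (List.range n).drop m =
    (List.range (n - m)).map (fun i => m + i) := by
  apply List.ext_getElem
  · simp
  · intro i h1 h2
    simp

end CF

theorem circular_factorization {A : Type*} [LinearOrder A]
    (n : ℕ) (hn : 1 ≤ n) (u : ℕ → List A) (a : ℕ → ℕ)
    (hly : ∀ i < n, IsLyndon (u i)) (hpos : ∀ i < n, 0 < a i) :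
    ∃ k < n, ∃ (v : List A) (β : ℕ), IsLyndon v ∧ 0 < β ∧
      pw v β =
        ((List.range (n - (k + 1))).map (fun i => pw (u (k + 1 + i)) (a (k + 1 + i)))).flatten
          ++ ((List.range (k + 1)).map (fun i => pw (u i) (a i))).flatten ∧
      v ≤ u k := by
  classical
  obtain ⟨L, hLdef⟩ : ∃ L : List (List A × ℕ),
      L = (List.range n).map (fun i => (u i, a i)) := ⟨_, rfl⟩
  have hgood : CF.good L := by
    intro p hp
    rw [hLdef] at hp
    simp only [List.mem_map, List.mem_range] at hp
    obtain ⟨i, hi, rfl⟩ := hp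
    exact ⟨hly i hi, hpos i hi⟩
  have hlenL : L.length = n := by simp [hLdef]
  have hne : L ≠ [] := by
    intro h
    rw [h] at hlenL
    simp at hlenL
    omega
  obtain ⟨P, S, x, v, β, hdec, hv, hβ, heq, hle⟩ :=
    CF.keylist L.length L le_rfl hne hgood
  have hk : P.length + 1 + S.length = n := by
    rw [← hlenL, hdec]
    simp
    omega
  have hsplit : P ++ x :: S = (P ++ [x]) ++ S := by simp
  have hPx : P ++ [x] = (List.range (P.length + 1)).map (fun i => (u i, a i)) := by
    have h1 : P ++ [x] = L.take (P.length + 1) := by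
      rw [hdec, hsplit, List.take_left' (by simp)]
    rw [h1, hLdef, ← List.map_take, CF.take_range (by omega)]
  have hS : S = (List.range (n - (P.length + 1))).map
      (fun i => (u (P.length + 1 + i), a (P.length + 1 + i))) := by
    have h1 : S = L.drop (P.length + 1) := by
      rw [hdec, hsplit, List.drop_left' (by simp)]
    rw [h1, hLdef, ← List.map_drop, CF.drop_range]
    simp [List.map_map, Function.comp]
  have hx : x = (u P.length, a P.length) := by
    rw [List.range_succ, List.map_append] at hPx
    have := List.append_inj_right hPx (by simp)
    simpa using this
  refine ⟨P.length, by omega, v, β, hv, hβ, ?_, ?_⟩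
  · rw [heq, List.append_assoc]
    congr 1
    · rw [hS]
      simp only [List.map_map]
      rfl
    · have h2 : (P.map CF.blk).flatten ++ CF.blk x = ((P ++ [x]).map CF.blk).flatten := by
        simp
      rw [h2, hPx]
      simp only [List.map_map]
      rfl
  · rw [hx] at hle
    exact hle
end
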